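/- Let n ≥ 0, k ≥ 2 be integers, 0 ≤ θ < 1, and K(t,u) = 1 + θ r(4(t-1/2)(u-1/2)) with r the (2n+1)-th real root. If a continuous function φ on [0,1] satisfies φ(t) = ∫₀¹ K(t,u) φ(u)^k du for all t, then φ has the form φ(t) = C₁ + C₂ θ r(4(t-1/2)), where C₁ = ∫₀¹ φ(u)^k du and C₂ = ∫₀¹ r(u-1/2) φ(u)^k du, and (C₁, C₂) is a fixed point of V_{k,n}. -/

import Mathlib

/-!
The kernel is separable: by multiplicativity of odd roots,
`r (4 (t - 1/2) (u - 1/2)) = r 4 · r (t - 1/2) · r (u - 1/2)`, so the equation forces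
`φ t = C₁ + C₂ θ r (4 (t - 1/2))`. Substituting this form back into the integrals defining `C₁`
and `C₂`, shifting to `[-1/2, 1/2]` and expanding binomially leaves the moments
`∫_{-1/2}^{1/2} r(s)^j ds`, which vanish for odd `j` (`r` is odd) and equal
`2^(-j/(2n+1)) (2n+1)/(2n+1+j)` for even `j` (`r` is `s ↦ s^(1/(2n+1))` on `s ≥ 0`);
collecting terms gives the two components of `V_{k,n}`.
-/

/-- The 2-dimensional operator `V_{k,n}` associated with the Hammerstein operator. -/
noncomputable def Vkn (k n : ℕ) (θ : ℝ) (p : ℝ × ℝ) : ℝ × ℝ :=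
  (∑ j ∈ Finset.range (k / 2 + 1),
      (k.choose (2 * j) : ℝ) * ((2 * (n:ℝ) + 1) / (2 * (n:ℝ) + 1 + 2 * (j:ℝ)))
        * (2:ℝ) ^ ((2 * (j:ℝ)) / (2 * (n:ℝ) + 1)) * p.1 ^ (k - 2 * j) * (θ * p.2) ^ (2 * j),
   ∑ j ∈ Finset.range ((k + 1) / 2),
      (k.choose (2 * j + 1) : ℝ) * ((2 * (n:ℝ) + 1) / (2 * (n:ℝ) + 2 + (2 * (j:ℝ) + 1)))
        * (2:ℝ) ^ ((2 * (j:ℝ)) / (2 * (n:ℝ) + 1)) * p.1 ^ (k - (2 * j + 1))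
        * (θ * p.2) ^ (2 * j + 1))

section OddRoot

variable {n : ℕ} {r : ℝ → ℝ}

lemma oddRoot_mul (hr : ∀ x, r x ^ (2 * n + 1) = x) (a b : ℝ) : r (a * b) = r a * r b :=
  (Odd.pow_inj ⟨n, rfl⟩).mp (by rw [hr, mul_pow, hr, hr])

lemma oddRoot_neg (hr : ∀ x, r x ^ (2 * n + 1) = x) (a : ℝ) : r (-a) = -r a :=
  (Odd.pow_inj ⟨n, rfl⟩).mp (by rw [hr, Odd.neg_pow ⟨n, rfl⟩, hr])

lemma continuous_oddRoot (hr : ∀ x, r x ^ (2 * n + 1) = x) : Continuous r := by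
  let e : ℝ ≃o ℝ := StrictMono.orderIsoOfSurjective (· ^ (2 * n + 1))
    (Odd.strictMono_pow ⟨n, rfl⟩) fun x ↦ ⟨r x, hr x⟩
  have hre : r = e.symm := funext fun x ↦ e.injective (by rw [e.apply_symm_apply]; exact hr x)
  exact hre ▸ e.symm.continuous

lemma oddRoot_eq_rpow (hr : ∀ x, r x ^ (2 * n + 1) = x) {x : ℝ} (hx : 0 ≤ x) :
    r x = x ^ (2 * (n : ℝ) + 1)⁻¹ := by
  refine (Odd.pow_inj ⟨n, rfl⟩).mp ?_
  rw [hr, ← Real.rpow_natCast, ← Real.rpow_mul hx]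
  norm_num [show (2 * (n : ℝ) + 1) ≠ 0 by positivity]

lemma oddRoot_four_pow_mul_two_rpow (hr : ∀ x, r x ^ (2 * n + 1) = x) (a b : ℕ) :
    r 4 ^ a * (2 : ℝ) ^ (-(b : ℝ) / (2 * n + 1)) = 2 ^ ((2 * a - b : ℝ) / (2 * n + 1)) := by
  have h4 : r 4 = (2 : ℝ) ^ (2 / (2 * n + 1 : ℝ)) := by
    rw [oddRoot_eq_rpow hr (by norm_num), show (4 : ℝ) = 2 ^ (2 : ℝ) by norm_num,
      ← Real.rpow_mul (by norm_num), div_eq_mul_inv]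
  rw [h4, ← Real.rpow_natCast, ← Real.rpow_mul (by norm_num), ← Real.rpow_add (by norm_num)]
  congr 1
  ring

lemma integral_zero_half_oddRoot_pow (hr : ∀ x, r x ^ (2 * n + 1) = x) (j : ℕ) :
    ∫ s in (0 : ℝ)..1 / 2, r s ^ j
      = 2 ^ (-(j : ℝ) / (2 * n + 1)) * ((2 * n + 1) / (2 * n + 1 + j)) / 2 := by
  have hpow : ∀ s ∈ Set.uIcc (0 : ℝ) (1 / 2), r s ^ j = s ^ ((j : ℝ) / (2 * n + 1)) := by
    intro s hs
    have hs0 : 0 ≤ s := by rw [Set.uIcc_of_le (by norm_num)] at hs; exact hs.1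
    rw [oddRoot_eq_rpow hr hs0, ← Real.rpow_natCast, ← Real.rpow_mul hs0, inv_mul_eq_div]
  have hexp : (-1 : ℝ) < j / (2 * n + 1) :=
    neg_one_lt_zero.trans_le (by positivity)
  rw [intervalIntegral.integral_congr hpow, integral_rpow (Or.inl hexp),
    Real.zero_rpow (by positivity), sub_zero, Real.rpow_add (by norm_num), Real.rpow_one,
    neg_div, Real.rpow_neg (by norm_num), ← Real.inv_rpow (by norm_num), ← one_div]
  field_simp
  ring

lemma integral_oddRoot_pow (hr : ∀ x, r x ^ (2 * n + 1) = x) (j : ℕ) :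
    ∫ s in -(1 / 2 : ℝ)..1 / 2, r s ^ j = (1 + (-1) ^ j) * ∫ s in (0 : ℝ)..1 / 2, r s ^ j := by
  have hint : ∀ a b : ℝ, IntervalIntegrable (fun s ↦ r s ^ j) MeasureTheory.volume a b :=
    fun a b ↦ ((continuous_oddRoot hr).pow j).intervalIntegrable a b
  have hneg : ∫ s in -(1 / 2 : ℝ)..0, r s ^ j = (-1) ^ j * ∫ s in (0 : ℝ)..1 / 2, r s ^ j := by
    have h := intervalIntegral.integral_comp_neg (fun s ↦ r s ^ j) (a := 0) (b := 1 / 2)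
    have hsymm : ∀ s, r (-s) ^ j = (-1) ^ j * r s ^ j := fun s ↦ by rw [oddRoot_neg hr, neg_pow]
    simp only [hsymm, neg_zero, intervalIntegral.integral_const_mul] at h
    exact h.symm
  rw [← intervalIntegral.integral_add_adjacent_intervals (hint _ 0) (hint 0 _), hneg]
  ring

lemma integral_oddRoot_pow_odd (hr : ∀ x, r x ^ (2 * n + 1) = x) {j : ℕ} (hj : Odd j) :
    ∫ s in -(1 / 2 : ℝ)..1 / 2, r s ^ j = 0 := by
  rw [integral_oddRoot_pow hr, hj.neg_one_pow, add_neg_cancel, zero_mul]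

lemma integral_oddRoot_pow_two_mul (hr : ∀ x, r x ^ (2 * n + 1) = x) (j : ℕ) :
    ∫ s in -(1 / 2 : ℝ)..1 / 2, r s ^ (2 * j)
      = 2 ^ (-(2 * j : ℝ) / (2 * n + 1)) * ((2 * n + 1) / (2 * n + 1 + 2 * j)) := by
  rw [integral_oddRoot_pow hr, (even_two_mul j).neg_one_pow, integral_zero_half_oddRoot_pow hr]
  push_cast
  ring

lemma integral_oddRoot_pow_mul_affine_pow (hr : ∀ x, r x ^ (2 * n + 1) = x) (C E : ℝ) (k m : ℕ) :
    ∫ s in -(1 / 2 : ℝ)..1 / 2, r s ^ m * (C + E * r s) ^ k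
      = ∑ l ∈ Finset.range (k + 1),
          k.choose l * C ^ (k - l) * E ^ l * ∫ s in -(1 / 2 : ℝ)..1 / 2, r s ^ (l + m) := by
  have hexpand : ∀ s, r s ^ m * (C + E * r s) ^ k
      = ∑ l ∈ Finset.range (k + 1), k.choose l * C ^ (k - l) * E ^ l * r s ^ (l + m) := by
    intro s
    rw [add_comm, add_pow, Finset.mul_sum]
    refine Finset.sum_congr rfl fun l _ ↦ ?_
    ring
  simp_rw [hexpand]
  have hr_cont := continuous_oddRoot hr
  rw [intervalIntegral.integral_finsetSum fun l _ ↦ by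
    apply Continuous.intervalIntegrable; fun_prop]
  simp_rw [intervalIntegral.integral_const_mul]

lemma integral_oddRoot_pow_mul_pow_of_eqOn (hr : ∀ x, r x ^ (2 * n + 1) = x) {φ : ℝ → ℝ}
    {C E : ℝ} (hφ : ∀ u ∈ Set.Icc (0 : ℝ) 1, φ u = C + E * r (u - 1 / 2)) (k m : ℕ) :
    ∫ u in (0 : ℝ)..1, r (u - 1 / 2) ^ m * φ u ^ k
      = ∑ l ∈ Finset.range (k + 1),
          k.choose l * C ^ (k - l) * E ^ l * ∫ s in -(1 / 2 : ℝ)..1 / 2, r s ^ (l + m) := by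
  rw [← integral_oddRoot_pow_mul_affine_pow hr]
  have hshift := intervalIntegral.integral_comp_sub_right
    (fun s ↦ r s ^ m * (C + E * r s) ^ k) (a := 0) (b := 1) (1 / 2)
  norm_num only at hshift
  rw [← hshift]
  refine intervalIntegral.integral_congr fun u hu ↦ ?_
  rw [Set.uIcc_of_le zero_le_one] at hu
  simp only [hφ u hu]

end OddRoot

section ParitySplit

variable {M : Type*} [AddCommMonoid M]

lemma Finset.sum_range_eq_sum_even_of_odd_eq_zero (N : ℕ) {f : ℕ → M}
    (hf : ∀ l, Odd l → f l = 0) :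
    ∑ l ∈ Finset.range N, f l = ∑ j ∈ Finset.range ((N + 1) / 2), f (2 * j) := by
  rw [← Finset.sum_filter_of_ne (p := Even) fun l _ hl ↦
    Nat.not_odd_iff_even.mp fun h ↦ hl (hf l h)]
  refine Finset.sum_nbij' (· / 2) (2 * ·) ?_ ?_ ?_ ?_ ?_ <;>
    intro l hl <;> simp only [Finset.mem_filter, Finset.mem_range, Nat.even_iff] at hl ⊢
  all_goals first | omega | congr 1; omega

lemma Finset.sum_range_eq_sum_odd_of_even_eq_zero (N : ℕ) {f : ℕ → M}
    (hf : ∀ l, Even l → f l = 0) :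
    ∑ l ∈ Finset.range N, f l = ∑ j ∈ Finset.range (N / 2), f (2 * j + 1) := by
  rw [← Finset.sum_filter_of_ne (p := Odd) fun l _ hl ↦
    Nat.not_even_iff_odd.mp fun h ↦ hl (hf l h)]
  refine Finset.sum_nbij' (· / 2) (2 * · + 1) ?_ ?_ ?_ ?_ ?_ <;>
    intro l hl <;> simp only [Finset.mem_filter, Finset.mem_range, Nat.odd_iff] at hl ⊢
  all_goals first | omega | congr 1; omega

end ParitySplit

section Vkn

variable {n : ℕ} {r : ℝ → ℝ}

lemma Vkn_fst_eq (hr : ∀ x, r x ^ (2 * n + 1) = x) (k : ℕ) (θ C₁ C₂ : ℝ) :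
    (Vkn k n θ (C₁, C₂)).1 = ∑ l ∈ Finset.range (k + 1),
      k.choose l * C₁ ^ (k - l) * (θ * C₂ * r 4) ^ l * ∫ s in -(1 / 2 : ℝ)..1 / 2, r s ^ l := by
  rw [Vkn, Finset.sum_range_eq_sum_even_of_odd_eq_zero (M := ℝ) (k + 1) fun l hl ↦ by
    rw [integral_oddRoot_pow_odd hr hl, mul_zero], show (k + 1 + 1) / 2 = k / 2 + 1 by omega]
  dsimp only
  refine Finset.sum_congr rfl fun j _ ↦ ?_
  have h2 := oddRoot_four_pow_mul_two_rpow hr (2 * j) (2 * j)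
  push_cast at h2
  rw [show 2 * (2 * (j : ℝ)) - 2 * j = 2 * j by ring] at h2
  rw [integral_oddRoot_pow_two_mul hr, mul_pow]
  linear_combination (-(k.choose (2 * j) * ((2 * n + 1) / (2 * n + 1 + 2 * j))
    * C₁ ^ (k - 2 * j) * (θ * C₂) ^ (2 * j)) : ℝ) * h2

lemma Vkn_snd_eq (hr : ∀ x, r x ^ (2 * n + 1) = x) (k : ℕ) (θ C₁ C₂ : ℝ) :
    (Vkn k n θ (C₁, C₂)).2 = ∑ l ∈ Finset.range (k + 1),
      k.choose l * C₁ ^ (k - l) * (θ * C₂ * r 4) ^ l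
        * ∫ s in -(1 / 2 : ℝ)..1 / 2, r s ^ (l + 1) := by
  rw [Vkn, Finset.sum_range_eq_sum_odd_of_even_eq_zero (M := ℝ) (k + 1) fun l hl ↦ by
    rw [integral_oddRoot_pow_odd hr hl.add_one, mul_zero]]
  dsimp only
  refine Finset.sum_congr rfl fun j _ ↦ ?_
  have h2 := oddRoot_four_pow_mul_two_rpow hr (2 * j + 1) (2 * (j + 1))
  push_cast at h2
  rw [show 2 * (2 * (j : ℝ) + 1) - 2 * (j + 1) = 2 * j by ring] at h2
  rw [show 2 * j + 1 + 1 = 2 * (j + 1) by ring, integral_oddRoot_pow_two_mul hr, mul_pow]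
  push_cast
  linear_combination (-(k.choose (2 * j + 1) * ((2 * n + 1) / (2 * n + 2 + (2 * j + 1)))
    * C₁ ^ (k - (2 * j + 1)) * (θ * C₂) ^ (2 * j + 1)) : ℝ) * h2

end Vkn

lemma hammerstein_solution_eq {k n : ℕ} {θ : ℝ} {r : ℝ → ℝ} (hr : ∀ x, r x ^ (2 * n + 1) = x)
    {φ : ℝ → ℝ} (hφc : ContinuousOn φ (Set.Icc (0 : ℝ) 1))
    (heq : ∀ t ∈ Set.Icc (0 : ℝ) 1,
      φ t = ∫ u in (0 : ℝ)..1, (1 + θ * r (4 * (t - 1 / 2) * (u - 1 / 2))) * φ u ^ k)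
    {t : ℝ} (ht : t ∈ Set.Icc (0 : ℝ) 1) :
    φ t = (∫ u in (0 : ℝ)..1, φ u ^ k)
      + (∫ u in (0 : ℝ)..1, r (u - 1 / 2) * φ u ^ k) * θ * r (4 * (t - 1 / 2)) := by
  rw [← Set.uIcc_of_le zero_le_one] at hφc
  have hint₁ : IntervalIntegrable (fun u ↦ φ u ^ k) MeasureTheory.volume 0 1 :=
    (hφc.pow k).intervalIntegrable
  have hint₂ : IntervalIntegrable (fun u ↦ r (u - 1 / 2) * φ u ^ k) MeasureTheory.volume 0 1 :=
    (((continuous_oddRoot hr).comp (continuous_sub_right _)).continuousOn.mul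
      (hφc.pow k)).intervalIntegrable
  have hkernel : ∀ u, (1 + θ * r (4 * (t - 1 / 2) * (u - 1 / 2))) * φ u ^ k
      = φ u ^ k + θ * r (4 * (t - 1 / 2)) * (r (u - 1 / 2) * φ u ^ k) := fun u ↦ by
    rw [oddRoot_mul hr]
    ring
  simp_rw [heq t ht, hkernel]
  rw [intervalIntegral.integral_add hint₁ (hint₂.const_mul _), intervalIntegral.integral_const_mul]
  ring

theorem stmt16_general (k n : ℕ) (θ : ℝ)
    (r : ℝ → ℝ) (hr : ∀ x : ℝ, r x ^ (2 * n + 1) = x)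
    (φ : ℝ → ℝ) (hφc : ContinuousOn φ (Set.Icc (0:ℝ) 1))
    (heq : ∀ t ∈ Set.Icc (0:ℝ) 1,
      φ t = ∫ u in (0:ℝ)..1, (1 + θ * r (4 * (t - 1/2) * (u - 1/2))) * (φ u) ^ k)
    (C₁ C₂ : ℝ)
    (hC₁ : C₁ = ∫ u in (0:ℝ)..1, (φ u) ^ k)
    (hC₂ : C₂ = ∫ u in (0:ℝ)..1, r (u - 1/2) * (φ u) ^ k) :
    (∀ t ∈ Set.Icc (0:ℝ) 1, φ t = C₁ + C₂ * θ * r (4 * (t - 1/2))) ∧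
      Vkn k n θ (C₁, C₂) = (C₁, C₂) := by
  have hform : ∀ t ∈ Set.Icc (0 : ℝ) 1, φ t = C₁ + C₂ * θ * r (4 * (t - 1 / 2)) :=
    fun t ht ↦ hC₁ ▸ hC₂ ▸ hammerstein_solution_eq hr hφc heq ht
  have hφ : ∀ u ∈ Set.Icc (0 : ℝ) 1, φ u = C₁ + θ * C₂ * r 4 * r (u - 1 / 2) := fun u hu ↦ by
    rw [hform u hu, oddRoot_mul hr]
    ring
  have h₁ := integral_oddRoot_pow_mul_pow_of_eqOn hr hφ k 0
  have h₂ := integral_oddRoot_pow_mul_pow_of_eqOn hr hφ k 1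
  simp only [pow_zero, one_mul, add_zero, pow_one] at h₁ h₂
  refine ⟨hform, Prod.ext ?_ ?_⟩
  · exact (Vkn_fst_eq hr k θ C₁ C₂).trans (h₁.symm.trans hC₁.symm)
  · exact (Vkn_snd_eq hr k θ C₁ C₂).trans (h₂.symm.trans hC₂.symm)

/-- any continuous solution of the Hammerstein equation has the form
`φ(t) = C₁ + C₂ θ r(4(t-1/2))` with `(C₁, C₂)` a fixed point of `V_{k,n}`. -/
theorem stmt16 (k n : ℕ) (hk : 2 ≤ k) (θ : ℝ) (hθ0 : 0 ≤ θ) (hθ1 : θ < 1)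
    (r : ℝ → ℝ) (hr : ∀ x : ℝ, r x ^ (2 * n + 1) = x)
    (φ : ℝ → ℝ) (hφc : ContinuousOn φ (Set.Icc (0:ℝ) 1))
    (heq : ∀ t ∈ Set.Icc (0:ℝ) 1,
      φ t = ∫ u in (0:ℝ)..1, (1 + θ * r (4 * (t - 1/2) * (u - 1/2))) * (φ u) ^ k)
    (C₁ C₂ : ℝ)
    (hC₁ : C₁ = ∫ u in (0:ℝ)..1, (φ u) ^ k)
    (hC₂ : C₂ = ∫ u in (0:ℝ)..1, r (u - 1/2) * (φ u) ^ k) :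
    (∀ t ∈ Set.Icc (0:ℝ) 1, φ t = C₁ + C₂ * θ * r (4 * (t - 1/2))) ∧
      Vkn k n θ (C₁, C₂) = (C₁, C₂) :=
  stmt16_general k n θ r hr φ hφc heq C₁ C₂ hC₁ hC₂
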